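/- If h is C¹, constant on connected level sets of a C² function H : ℝ² → ℝ (with H having compact level sets), then div(h · A∇H) = 0 identically on ℝ², where A∇H is the symplectic gradient. -/

import Mathlib

open MeasureTheory Set
open scoped RealInnerProductSpace

noncomputable section

abbrev E2 : Type := EuclideanSpace ℝ (Fin 2)

/-- `x` and `y` lie in the same connected component of a level set of `H`. -/
def sameComp (H : E2 → ℝ) (x y : E2) : Prop :=
  y ∈ connectedComponentIn (H ⁻¹' {H x}) x

/-- Application of the standard symplectic matrix: `A(x₁, x₂) = (−x₂, x₁)`. -/
def symp (v : E2) : E2 := WithLp.toLp 2 (fun i => if i = 0 then -(v 1) else v 0)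

/-- Divergence of a vector field on `ℝ²`. -/
def div2 (V : E2 → E2) (x : E2) : ℝ :=
  ∑ i : Fin 2, fderiv ℝ (fun y => V y i) x (EuclideanSpace.single i 1)

-- symp as a continuous linear map
def sympL : E2 →L[ℝ] E2 := LinearMap.toContinuousLinearMap
  { toFun := symp
    map_add' := by
      intro u v; ext i
      by_cases hi : i = 0 <;> simp [symp, hi, add_comm]
    map_smul' := by
      intro c v; ext i
      by_cases hi : i = 0 <;> simp [symp, hi, mul_comm] }

lemma sympL_apply (v : E2) : sympL v = symp v := rfl

lemma inner_gradient (H : E2 → ℝ) (y v : E2) : ⟪gradient H y, v⟫ = fderiv ℝ H y v := by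
  rw [gradient]
  have := (InnerProductSpace.toDual ℝ E2).apply_symm_apply (fderiv ℝ H y)
  rw [← this]
  simp [InnerProductSpace.toDual_apply_apply]

lemma inner_symp (u : E2) : ⟪u, symp u⟫ = 0 := by
  simp [PiLp.inner_apply, Fin.sum_univ_two, symp]
  ring

lemma const_of_hasDerivAt_zero {f : ℝ → ℝ} {ε : ℝ}
    (hf : ∀ t ∈ Ioo (-ε) ε, HasDerivAt f 0 t)
    {t : ℝ} (ht : t ∈ Ioo (-ε) ε) : f t = f 0 := by
  obtain ⟨ht1, ht2⟩ := ht
  rcases le_total 0 t with h0 | h0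
  · have hε : (0:ℝ) < ε := lt_of_le_of_lt h0 ht2
    have hsub : Icc (0:ℝ) t ⊆ Ioo (-ε) ε := fun y hy =>
      ⟨by linarith [hy.1], by linarith [hy.2]⟩
    exact constant_of_has_deriv_right_zero
      (fun y hy => ((hf y (hsub hy)).continuousAt).continuousWithinAt)
      (fun y hy => ((hf y (hsub (Ico_subset_Icc_self hy))).hasDerivWithinAt)) t
      (right_mem_Icc.mpr h0) ▸ rfl
  · have hε : (0:ℝ) < ε := by linarith
    have hsub : Icc t (0:ℝ) ⊆ Ioo (-ε) ε := fun y hy =>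
      ⟨by linarith [hy.1], by linarith [hy.2]⟩
    have := constant_of_has_deriv_right_zero
      (f := f) (a := t) (b := 0)
      (fun y hy => ((hf y (hsub hy)).continuousAt).continuousWithinAt)
      (fun y hy => ((hf y (hsub (Ico_subset_Icc_self hy))).hasDerivWithinAt)) 0
      (right_mem_Icc.mpr h0)
    exact this.symm

lemma gradient_coord (H : E2 → ℝ) (y : E2) (i : Fin 2) :
    gradient H y i = fderiv ℝ H y (EuclideanSpace.single i 1) := by
  rw [← inner_gradient H y (EuclideanSpace.single i 1),
    EuclideanSpace.inner_single_right]
  simp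

theorem stmt3 (H : E2 → ℝ) (hH : ContDiff ℝ 2 H)
    (hcpt : ∀ c : ℝ, IsCompact (H ⁻¹' {c}))
    (h : E2 → ℝ) (hh : ContDiff ℝ 1 h)
    (hconst : ∀ x y, sameComp H x y → h x = h y) :
    ∀ x : E2, div2 (fun y => h y • symp (gradient H y)) x = 0 := by
  intro x
  have hHd : Differentiable ℝ H := hH.differentiable two_ne_zero
  have hf'c : ContDiff ℝ 1 (fderiv ℝ H) := hH.fderiv_right (le_refl 2)
  have hgrad : ContDiff ℝ 1 (gradient H) :=
    ((InnerProductSpace.toDual ℝ E2).symm.contDiff).comp hf'c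
  have hVc : ContDiff ℝ 1 (fun y => symp (gradient H y)) := by
    exact sympL.contDiff.comp hgrad
  set V : E2 → E2 := fun y => symp (gradient H y) with hVdef
  have hVd : Differentiable ℝ V := hVc.differentiable one_ne_zero
  have hhd : Differentiable ℝ h := hh.differentiable one_ne_zero
  -- Key step: the derivative of h in the direction of the symplectic gradient vanishes
  have key : fderiv ℝ h x (V x) = 0 := by
    obtain ⟨φ, hφ0, ε, hε, hφ⟩ :=
      ContDiffAt.exists_forall_mem_closedBall_exists_eq_forall_mem_Ioo_hasDerivAt₀ (x₀ := x) hVc.contDiffAt (0:ℝ)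
    simp only [zero_sub, zero_add] at hφ
    have hφd : ∀ t ∈ Ioo (-ε) ε, HasDerivAt φ (V (φ t)) t := hφ
    have hHφ : ∀ t ∈ Ioo (-ε) ε, H (φ t) = H x := by
      intro t ht
      have hz : ∀ s ∈ Ioo (-ε) ε, HasDerivAt (fun u => H (φ u)) 0 s := by
        intro s hs
        have h1 := (hHd (φ s)).hasFDerivAt.comp_hasDerivAt s (hφd s hs)
        have h2 : fderiv ℝ H (φ s) (V (φ s)) = 0 := by
          rw [← inner_gradient]; exact inner_symp _
        rw [h2] at h1
        exact h1
      have := const_of_hasDerivAt_zero hz ht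
      rwa [hφ0] at this
    have hmem : ∀ t ∈ Ioo (-ε) ε, φ t ∈ connectedComponentIn (H ⁻¹' {H x}) x := by
      intro t ht
      have hconn : IsPreconnected (φ '' Ioo (-ε) ε) :=
        isPreconnected_Ioo.image _
          (fun s hs => ((hφd s hs).continuousAt).continuousWithinAt)
      have hsub : φ '' Ioo (-ε) ε ⊆ H ⁻¹' {H x} := by
        rintro _ ⟨s, hs, rfl⟩; exact hHφ s hs
      have hx0 : x ∈ φ '' Ioo (-ε) ε := ⟨0, ⟨by linarith, hε⟩, hφ0⟩
      exact hconn.subset_connectedComponentIn hx0 hsub ⟨t, ht, rfl⟩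
    have heq : (fun t => h (φ t)) =ᶠ[nhds 0] (fun _ => h x) := by
      filter_upwards [Ioo_mem_nhds (by linarith : -ε < 0) hε] with t ht
      exact (hconst x (φ t) (hmem t ht)).symm
    have h1 : HasDerivAt (fun t => h (φ t)) (fderiv ℝ h x (V x)) 0 := by
      have hd0 : HasDerivAt φ (V x) 0 := by
        simpa [hφ0] using hφd 0 ⟨by linarith, hε⟩
      have hF : HasFDerivAt h (fderiv ℝ h x) (φ 0) := hφ0 ▸ (hhd x).hasFDerivAt
      have := hF.comp_hasDerivAt 0 hd0
      simpa [Function.comp_def, hφ0] using this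
    have h2 : HasDerivAt (fun t => h (φ t)) 0 0 :=
      (hasDerivAt_const 0 (h x)).congr_of_eventuallyEq heq
    exact h1.unique h2
  -- Clairaut: div of the symplectic gradient vanishes
  have hf'd : DifferentiableAt ℝ (fderiv ℝ H) x := (hf'c.differentiable one_ne_zero) x
  have hclm : ∀ v : E2, fderiv ℝ (fun y => fderiv ℝ H y v) x
      = (fderiv ℝ (fderiv ℝ H) x).flip v := by
    intro v
    have := fderiv_clm_apply (c := fderiv ℝ H) (u := fun _ => v) hf'd
      (differentiableAt_const v)
    simpa using this
  have hsymm := second_derivative_symmetric (f := H) (fun y => (hHd y).hasFDerivAt)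
    hf'd.hasFDerivAt (EuclideanSpace.single 0 1) (EuclideanSpace.single 1 1)
  have hV0 : (fun y => V y 0) = fun y => -(fderiv ℝ H y (EuclideanSpace.single 1 1)) := by
    funext y; simp [hVdef, symp, gradient_coord]
  have hV1 : (fun y => V y 1) = fun y => fderiv ℝ H y (EuclideanSpace.single 0 1) := by
    funext y; simp [hVdef, symp, gradient_coord]
  have hdivV : div2 V x = 0 := by
    rw [div2, Fin.sum_univ_two, hV0, hV1, fderiv_fun_neg, hclm, hclm]
    simp [hsymm]
  -- coordinate differentiability
  have hVdi : ∀ i : Fin 2, DifferentiableAt ℝ (fun y => V y i) x := fun i =>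
    (EuclideanSpace.proj (𝕜 := ℝ) i).differentiableAt.comp x (hVd x)
  -- expand the divergence of the product
  have hVx : V x = V x 0 • EuclideanSpace.single (0 : Fin 2) 1
      + V x 1 • EuclideanSpace.single (1 : Fin 2) 1 := by
    ext i; fin_cases i <;> simp [EuclideanSpace.single_apply]
  have hsum : fderiv ℝ h x (V x)
      = V x 0 * fderiv ℝ h x (EuclideanSpace.single 0 1)
      + V x 1 * fderiv ℝ h x (EuclideanSpace.single 1 1) := by
    conv_lhs => rw [hVx]
    simp
  rw [div2, Fin.sum_univ_two]
  have e0 : (fun y => (h y • V y) 0) = fun y => h y * V y 0 := by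
    funext y; simp
  have e1 : (fun y => (h y • V y) 1) = fun y => h y * V y 1 := by
    funext y; simp
  rw [show (fun y => ((fun y => h y • V y) y) 0) = fun y => h y * V y 0 from e0] at *
  rw [e0, e1, fderiv_fun_mul (hhd x) (hVdi 0), fderiv_fun_mul (hhd x) (hVdi 1)]
  have := hdivV
  rw [div2, Fin.sum_univ_two, hV0, hV1] at this
  rw [hV0, hV1] at *
  simp only [ContinuousLinearMap.add_apply, ContinuousLinearMap.smul_apply, smul_eq_mul]
  linear_combination h x * this + key - hsum
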